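/- arXiv:1209.2285 — 5 statements merged into one kernel-verified Lean document; each statement's English description precedes it below -/
import Mathlib

section
/- For ω ∈ [0, π/2] and α, θ ∈ [0,π], φ, β ∈ [0,2π], the quantity 2 sin(ω/2) sin α sin θ [cos(ω/2) cos(φ−β) − sin(ω/2) cos θ sin(φ−β)] is at most sin ω. -/
/-!
Write `s = sin (ω/2)`, `c = cos (ω/2)`, so `sin ω = 2 s c`. By Cauchy–Schwarz the bracket is at most
`√(c² + s² cos² θ)` in absolute value, and `sin² θ (c² + s² cos² θ) ≤ c²` as soon as `s² ≤ c²`,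
i.e. `cos ω ≥ 0`. Hence `sin θ` times the bracket lies in `[-c, c]`, and `|sin α| ≤ 1` finishes.
-/

open Real

theorem sq_mul_cos_add_mul_sin_le (a b x : ℝ) : (a * cos x + b * sin x) ^ 2 ≤ a ^ 2 + b ^ 2 := by
  nlinarith [sq_nonneg (a * sin x - b * cos x), sin_sq_add_cos_sq x]

theorem sin_sq_mul_add_le_of_sq_le_sq {c s : ℝ} (θ : ℝ) (hsc : s ^ 2 ≤ c ^ 2) :
    sin θ ^ 2 * (c ^ 2 + s ^ 2 * cos θ ^ 2) ≤ c ^ 2 := by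
  have hθ := sin_sq_add_cos_sq θ
  -- `c² - sin² θ (c² + s² cos² θ) = cos² θ (c² - s² sin² θ)`
  have hgap : 0 ≤ c ^ 2 - s ^ 2 * sin θ ^ 2 := by
    nlinarith [mul_le_mul_of_nonneg_left (sin_sq_le_one θ) (sq_nonneg s)]
  nlinarith [mul_nonneg (sq_nonneg (cos θ)) hgap]

theorem abs_sin_mul_cos_sub_sin_le {c s : ℝ} (θ x : ℝ) (hc : 0 ≤ c) (hsc : s ^ 2 ≤ c ^ 2) :
    |sin θ * (c * cos x - s * cos θ * sin x)| ≤ c := by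
  refine abs_le_of_sq_le_sq ?_ hc
  have hbracket := sq_mul_cos_add_mul_sin_le c (-(s * cos θ)) x
  calc (sin θ * (c * cos x - s * cos θ * sin x)) ^ 2
      = sin θ ^ 2 * (c * cos x + -(s * cos θ) * sin x) ^ 2 := by ring
    _ ≤ sin θ ^ 2 * (c ^ 2 + s ^ 2 * cos θ ^ 2) := by
      rw [neg_sq, mul_pow] at hbracket
      gcongr
    _ ≤ c ^ 2 := sin_sq_mul_add_le_of_sq_le_sq θ hsc

theorem sin_half_sq_le_cos_half_sq {ω : ℝ} (hω : ω ∈ Set.Icc (-(π / 2)) (π / 2)) :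
    sin (ω / 2) ^ 2 ≤ cos (ω / 2) ^ 2 := by
  rw [← sub_nonneg, ← cos_two_mul', mul_div_cancel₀ ω two_ne_zero]
  exact cos_nonneg_of_mem_Icc hω

theorem eta_add_xi_le_sin_general (α β θ φ ω : ℝ)
    (hω : ω ∈ Set.Icc 0 (π / 2)) :
    2 * Real.sin (ω / 2) * Real.sin α * Real.sin θ *
        (Real.cos (ω / 2) * Real.cos (φ - β) - Real.sin (ω / 2) * Real.cos θ * Real.sin (φ - β))
      ≤ Real.sin ω := by
  obtain ⟨hω0, hωπ⟩ := hω
  have hs : 0 ≤ sin (ω / 2) := sin_nonneg_of_nonneg_of_le_pi (by linarith) (by linarith [pi_pos])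
  have hc : 0 ≤ cos (ω / 2) := cos_nonneg_of_mem_Icc ⟨by linarith [pi_pos], by linarith⟩
  have hsc := sin_half_sq_le_cos_half_sq ⟨by linarith [pi_pos], hωπ⟩
  have hbound := abs_sin_mul_cos_sub_sin_le θ (φ - β) hc hsc
  calc 2 * sin (ω / 2) * sin α * sin θ *
        (cos (ω / 2) * cos (φ - β) - sin (ω / 2) * cos θ * sin (φ - β))
      = 2 * sin (ω / 2) *
          (sin α * (sin θ * (cos (ω / 2) * cos (φ - β) - sin (ω / 2) * cos θ * sin (φ - β)))) := by
        ring
    _ ≤ 2 * sin (ω / 2) * cos (ω / 2) := by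
        gcongr
        refine (le_abs_self _).trans ?_
        rw [abs_mul]
        exact (mul_le_of_le_one_left (abs_nonneg _) (abs_sin_le_one α)).trans hbound
    _ = sin ω := by rw [← sin_two_mul, mul_div_cancel₀ ω two_ne_zero]

/-- For `ω ∈ [0, π/2]`, `α, θ ∈ [0,π]`, `φ, β ∈ [0,2π]`,
`2 sin(ω/2) sin α sin θ [cos(ω/2) cos(φ−β) − sin(ω/2) cos θ sin(φ−β)] ≤ sin ω`. -/
theorem eta_add_xi_le_sin (α β θ φ ω : ℝ)
    (hα : α ∈ Set.Icc 0 π) (hθ : θ ∈ Set.Icc 0 π) (hω : ω ∈ Set.Icc 0 (π / 2))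
    (hβ : β ∈ Set.Icc 0 (2 * π)) (hφ : φ ∈ Set.Icc 0 (2 * π)) :
    2 * Real.sin (ω / 2) * Real.sin α * Real.sin θ *
        (Real.cos (ω / 2) * Real.cos (φ - β) - Real.sin (ω / 2) * Real.cos θ * Real.sin (φ - β))
      ≤ Real.sin ω :=
  eta_add_xi_le_sin_general α β θ φ ω hω
end

section
/- Let 0 ≤ d_z ≤ d_y ≤ d_x ≤ π/2 and set a = cos d_z sin d_x, b = cos d_z sin d_y, c = cos d_y sin d_x, g = cos d_y sin d_z, p = cos d_x sin d_y, q = cos d_x sin d_z, h = cos d_y sin d_y. Suppose real numbers λ, μ, γ, η, ν, ξ satisfy λ+γ ≤ 1, ν+μ ≤ 1, λ+μ+γ+η ≤ 2, and λ+μ+γ+η+ν+ξ ≤ 2, with all of λ, μ, γ, η, ν, ξ in [−1,1]. Then λa + μb + γc + ηg + νp + ξq ≤ a + b. -/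
open Real

/-! The bound is a linear program in `λ, μ, γ, η, ν, ξ`, and `a + b - f₂` is the nonnegative
combination
`(c - g)(1 - λ - γ) + (p - q)(1 - ν - μ) + (g - q)(2 - λ - μ - γ - η)`
`  + q(2 - λ - μ - γ - η - ν - ξ) + (a - c)(1 - λ) + (b - g - p + q)(1 - μ)`
of the slacks of the constraints. The weights are nonnegative because `sin` increases and `cos`
decreases on `[0, π/2]`; for the last one, `b - g - p + q = sin d_y (cos d_z - cos d_x)
- sin d_z (cos d_y - cos d_x)`. -/

theorem add_le_of_slack {a b c g p q lam mu gam eta nu xi : ℝ}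
    (hca : c ≤ a) (hgc : g ≤ c) (hqp : q ≤ p) (hqg : q ≤ g) (hq : 0 ≤ q)
    (hb : g + p ≤ b + q) (hlam : lam ≤ 1) (hmu : mu ≤ 1) (h1 : lam + gam ≤ 1)
    (h2 : nu + mu ≤ 1) (h3 : lam + mu + gam + eta ≤ 2)
    (h4 : lam + mu + gam + eta + nu + xi ≤ 2) :
    lam * a + mu * b + gam * c + eta * g + nu * p + xi * q ≤ a + b := by
  have hb' : 0 ≤ b + q - g - p := by linarith
  linear_combination mul_le_mul_of_nonneg_left h1 (sub_nonneg.2 hgc)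
    + mul_le_mul_of_nonneg_left h2 (sub_nonneg.2 hqp)
    + mul_le_mul_of_nonneg_left h3 (sub_nonneg.2 hqg)
    + mul_le_mul_of_nonneg_left h4 hq + mul_le_mul_of_nonneg_left hlam (sub_nonneg.2 hca)
    + mul_le_mul_of_nonneg_left hmu hb'

theorem weighted_sum_le_of_monotone {sx sy sz cx cy cz lam mu gam eta nu xi : ℝ}
    (hsz : 0 ≤ sz) (hszy : sz ≤ sy) (hsyx : sy ≤ sx)
    (hcx : 0 ≤ cx) (hcxy : cx ≤ cy) (hcyz : cy ≤ cz)
    (hlam : lam ≤ 1) (hmu : mu ≤ 1) (h1 : lam + gam ≤ 1) (h2 : nu + mu ≤ 1)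
    (h3 : lam + mu + gam + eta ≤ 2) (h4 : lam + mu + gam + eta + nu + xi ≤ 2) :
    lam * (cz * sx) + mu * (cz * sy) + gam * (cy * sx) + eta * (cy * sz)
      + nu * (cx * sy) + xi * (cx * sz) ≤ cz * sx + cz * sy := by
  have hsy : 0 ≤ sy := hsz.trans hszy
  have hcy : 0 ≤ cy := hcx.trans hcxy
  have hb : sz * (cy - cx) ≤ sy * (cz - cx) :=
    mul_le_mul hszy (by linarith) (by linarith) hsy
  refine add_le_of_slack ?_ ?_ ?_ ?_ (mul_nonneg hcx hsz) (by linarith) hlam hmu h1 h2 h3 h4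
  · exact mul_le_mul_of_nonneg_right hcyz (hsz.trans (hszy.trans hsyx))
  · exact mul_le_mul_of_nonneg_left (hszy.trans hsyx) hcy
  · exact mul_le_mul_of_nonneg_left hszy hcx
  · exact mul_le_mul_of_nonneg_right hcxy hsz

theorem f2_le_a_add_b_general (dx dy dz lam mu gam eta nu xi : ℝ)
    (h0 : 0 ≤ dz) (hzy : dz ≤ dy) (hyx : dy ≤ dx) (hx : dx ≤ π / 2)
    (hlam : lam ∈ Set.Icc (-1 : ℝ) 1) (hmu : mu ∈ Set.Icc (-1 : ℝ) 1)
    (h1 : lam + gam ≤ 1) (h2 : nu + mu ≤ 1)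
    (h3 : lam + mu + gam + eta ≤ 2)
    (h4 : lam + mu + gam + eta + nu + xi ≤ 2) :
    lam * (Real.cos dz * Real.sin dx) + mu * (Real.cos dz * Real.sin dy)
      + gam * (Real.cos dy * Real.sin dx) + eta * (Real.cos dy * Real.sin dz)
      + nu * (Real.cos dx * Real.sin dy) + xi * (Real.cos dx * Real.sin dz)
      ≤ Real.cos dz * Real.sin dx + Real.cos dz * Real.sin dy := by
  have hpi := Real.pi_pos
  apply weighted_sum_le_of_monotone (sin_nonneg_of_nonneg_of_le_pi h0 (by linarith))
    (sin_le_sin_of_le_of_le_pi_div_two (by linarith) (by linarith) hzy)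
    (sin_le_sin_of_le_of_le_pi_div_two (by linarith) hx hyx)
    (cos_nonneg_of_mem_Icc ⟨by linarith, hx⟩)
    (cos_le_cos_of_nonneg_of_le_pi (by linarith) (by linarith) hyx)
    (cos_le_cos_of_nonneg_of_le_pi h0 (by linarith) hzy)
    hlam.2 hmu.2 h1 h2 h3 h4

/-- Proposition 2 of Appendix C (abstracted): under the coefficient constraints,
`λa + μb + γc + ηg + νp + ξq ≤ a + b`. -/
theorem f2_le_a_add_b (dx dy dz lam mu gam eta nu xi : ℝ)
    (h0 : 0 ≤ dz) (hzy : dz ≤ dy) (hyx : dy ≤ dx) (hx : dx ≤ π / 2)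
    (hlam : lam ∈ Set.Icc (-1 : ℝ) 1) (hmu : mu ∈ Set.Icc (-1 : ℝ) 1)
    (hgam : gam ∈ Set.Icc (-1 : ℝ) 1) (heta : eta ∈ Set.Icc (-1 : ℝ) 1)
    (hnu : nu ∈ Set.Icc (-1 : ℝ) 1) (hxi : xi ∈ Set.Icc (-1 : ℝ) 1)
    (h1 : lam + gam ≤ 1) (h2 : nu + mu ≤ 1)
    (h3 : lam + mu + gam + eta ≤ 2)
    (h4 : lam + mu + gam + eta + nu + xi ≤ 2) :
    lam * (Real.cos dz * Real.sin dx) + mu * (Real.cos dz * Real.sin dy)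
      + gam * (Real.cos dy * Real.sin dx) + eta * (Real.cos dy * Real.sin dz)
      + nu * (Real.cos dx * Real.sin dy) + xi * (Real.cos dx * Real.sin dz)
      ≤ Real.cos dz * Real.sin dx + Real.cos dz * Real.sin dy :=
  f2_le_a_add_b_general dx dy dz lam mu gam eta nu xi h0 hzy hyx hx hlam hmu h1 h2 h3 h4
end

section
/- Let 0 ≤ d_z ≤ d_y ≤ d_x ≤ π/2, let S ∈ SO(3) with entries S_l^n and columns forming a right-handed orthonormal frame, and let T ∈ ℝ³ be a unit vector. Define f₁ = sin d_y sin d_z S_x^x + sin d_z sin d_x S_y^y + sin d_x sin d_y S_z^z. Then f₁ ≤ sin d_x sin d_y + (sin d_x + sin d_y) sin d_z. -/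
open Matrix Real

theorem Matrix.apply_le_one_of_mem_orthogonalGroup {n : Type*} [Fintype n] [DecidableEq n]
    {A : Matrix n n ℝ} (hA : A ∈ orthogonalGroup n ℝ) (i j : n) : A i j ≤ 1 :=
  (le_abs_self _).trans (by simpa using entry_norm_bound_of_unitary hA i j)

theorem f1_le_max_general (dx dy dz : ℝ)
    (h0 : 0 ≤ dz) (hzy : dz ≤ dy) (hyx : dy ≤ dx) (hx : dx ≤ π / 2)
    (S : Matrix (Fin 3) (Fin 3) ℝ) (hS : S ∈ specialOrthogonalGroup (Fin 3) ℝ) :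
    Real.sin dy * Real.sin dz * S 0 0 + Real.sin dz * Real.sin dx * S 1 1
        + Real.sin dx * Real.sin dy * S 2 2
      ≤ Real.sin dx * Real.sin dy + (Real.sin dx + Real.sin dy) * Real.sin dz := by
  have hdiag (i : Fin 3) : S i i ≤ 1 :=
    apply_le_one_of_mem_orthogonalGroup (mem_specialOrthogonalGroup_iff.mp hS).1 i i
  have hsin_nonneg {d : ℝ} (hd0 : 0 ≤ d) (hd : d ≤ dx) : 0 ≤ Real.sin d :=
    sin_nonneg_of_nonneg_of_le_pi hd0 (by linarith [pi_pos])
  have hsz := hsin_nonneg h0 (hzy.trans hyx)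
  have hsy := hsin_nonneg (h0.trans hzy) hyx
  have hsx := hsin_nonneg (h0.trans (hzy.trans hyx)) le_rfl
  linarith [mul_le_of_le_one_right (mul_nonneg hsy hsz) (hdiag 0),
    mul_le_of_le_one_right (mul_nonneg hsz hsx) (hdiag 1),
    mul_le_of_le_one_right (mul_nonneg hsx hsy) (hdiag 2)]

/-- The diagonal part `f₁` of the QST objective satisfies
`f₁ ≤ sin d_x sin d_y + (sin d_x + sin d_y) sin d_z`. -/
theorem f1_le_max (dx dy dz : ℝ)
    (h0 : 0 ≤ dz) (hzy : dz ≤ dy) (hyx : dy ≤ dx) (hx : dx ≤ π / 2)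
    (S : Matrix (Fin 3) (Fin 3) ℝ) (hS : S ∈ specialOrthogonalGroup (Fin 3) ℝ)
    (T : Fin 3 → ℝ) (hT : ∑ i, T i ^ 2 = 1) :
    Real.sin dy * Real.sin dz * S 0 0 + Real.sin dz * Real.sin dx * S 1 1
        + Real.sin dx * Real.sin dy * S 2 2
      ≤ Real.sin dx * Real.sin dy + (Real.sin dx + Real.sin dy) * Real.sin dz :=
  f1_le_max_general dx dy dz h0 hzy hyx hx S hS
end

section
/- For d_x = π/2, d_y = d_z = 0, the maximum over S ∈ SO(3) and unit vectors T of T^x S_z^x + T^y S_z^y is 1, and hence the QST power of the CNOT gate, given by 1/2 + (max)/6, equals 2/3. -/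
/-!
Each row of an orthogonal matrix is a unit vector, so `T^x S_z^x + T^y S_z^y` is a partial inner
product of two unit vectors and is at most `1` by `2ab ≤ a² + b²`. The bound is attained by the
cyclic permutation matrix, an even permutation with `S_z = e_x`, together with `T = e_x`.
-/

open Matrix

theorem Matrix.permMatrix_mem_specialOrthogonalGroup {n R : Type*} [DecidableEq n] [Fintype n]
    [CommRing R] {σ : Equiv.Perm n} (hσ : Equiv.Perm.sign σ = 1) :
    σ.permMatrix R ∈ specialOrthogonalGroup n R := by
  refine mem_specialOrthogonalGroup_iff.mpr ⟨(mem_orthogonalGroup_iff n R).mpr ?_, by simp [hσ]⟩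
  rw [transpose_permMatrix, ← permMatrix_mul, inv_mul_cancel, permMatrix_one]

theorem Matrix.sum_sq_row_of_mem_orthogonalGroup {n R : Type*} [DecidableEq n] [Fintype n]
    [CommRing R] {A : Matrix n n R} (hA : A ∈ orthogonalGroup n R) (i : n) :
    ∑ j, A i j ^ 2 = 1 := by
  simpa [mul_apply, sq] using congrFun₂ ((mem_orthogonalGroup_iff n R).mp hA) i i

theorem Finset.sum_mul_le_one_of_sum_sq_eq_one {ι : Type*} [Fintype ι] (s : Finset ι)
    {u v : ι → ℝ} (hu : ∑ i, u i ^ 2 = 1) (hv : ∑ i, v i ^ 2 = 1) :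
    ∑ i ∈ s, u i * v i ≤ 1 :=
  calc ∑ i ∈ s, u i * v i ≤ ∑ i ∈ s, (u i ^ 2 + v i ^ 2) / 2 :=
        sum_le_sum fun i _ => by linarith [two_mul_le_add_sq (u i) (v i)]
    _ ≤ ∑ i, (u i ^ 2 + v i ^ 2) / 2 :=
        sum_le_univ_sum_of_nonneg fun i => by positivity
    _ = 1 := by rw [← sum_div, sum_add_distrib, hu, hv]; norm_num

/-- For `d_x = π/2`, `d_y = d_z = 0`, the maximum over `S ∈ SO(3)` and unit `T` of
`T^x S_z^x + T^y S_z^y` is `1`, hence the QST power of the CNOT gate,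
`1/2 + (max)/6`, equals `2/3`. -/
theorem qst_power_CNOT :
    IsGreatest {x : ℝ | ∃ S ∈ specialOrthogonalGroup (Fin 3) ℝ, ∃ T : Fin 3 → ℝ,
        (∑ i, T i ^ 2 = 1) ∧ x = T 0 * S 2 0 + T 1 * S 2 1} 1 ∧
    (1 / 2 : ℝ) + sSup {x : ℝ | ∃ S ∈ specialOrthogonalGroup (Fin 3) ℝ, ∃ T : Fin 3 → ℝ,
        (∑ i, T i ^ 2 = 1) ∧ x = T 0 * S 2 0 + T 1 * S 2 1} / 6 = 2 / 3 := by
  have hmax : IsGreatest {x : ℝ | ∃ S ∈ specialOrthogonalGroup (Fin 3) ℝ, ∃ T : Fin 3 → ℝ,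
      (∑ i, T i ^ 2 = 1) ∧ x = T 0 * S 2 0 + T 1 * S 2 1} 1 := by
    constructor
    · refine ⟨(finRotate 3).permMatrix ℝ,
        permMatrix_mem_specialOrthogonalGroup (by simp [sign_finRotate]), ![1, 0, 0],
        by simp [Fin.sum_univ_three], ?_⟩
      simp [PEquiv.toMatrix_apply, Equiv.toPEquiv_apply]
    · rintro x ⟨S, hS, T, hT, rfl⟩
      have hrow := sum_sq_row_of_mem_orthogonalGroup (mem_specialOrthogonalGroup_iff.mp hS).1 2
      simpa [Finset.sum_pair] using Finset.sum_mul_le_one_of_sum_sq_eq_one {0, 1} hT hrow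
  refine ⟨hmax, ?_⟩
  rw [hmax.csSup_eq]
  norm_num
end

section
/- If ω ∈ [0, π/2] and θ ∈ [0, π], then 2 sin(ω/2) sin θ √(cos²(ω/2) + sin²(ω/2) cos²θ) ≤ sin ω. -/
open Real

/-! With `s = sin (ω/2)`, `c = cos (ω/2)` and `t = sin θ`, the left side is
`2 s · t √(c² + s² (1 - t²))`. Since `s² ≤ c²` (their difference is `cos ω ≥ 0`), the function
`t² (c² + s² (1 - t²))` of `t² ∈ [0, 1]` is at most `c²`, so the left side is at most
`2 s c = sin ω`. -/

theorem mul_sqrt_add_mul_one_sub_sq_le {a b t : ℝ} (hb : 0 ≤ b) (hab : a ^ 2 ≤ b ^ 2)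
    (ht : t ^ 2 ≤ 1) : t * √(b ^ 2 + a ^ 2 * (1 - t ^ 2)) ≤ b := by
  have hX : 0 ≤ b ^ 2 + a ^ 2 * (1 - t ^ 2) := by nlinarith [sq_nonneg a, sq_nonneg b]
  -- `b² - t² (b² + a² (1 - t²)) = (1 - t²) (b² - a² t²)`
  have key : t ^ 2 * (b ^ 2 + a ^ 2 * (1 - t ^ 2)) ≤ b ^ 2 := by
    have hat : a ^ 2 * t ^ 2 ≤ b ^ 2 := by nlinarith [sq_nonneg a]
    nlinarith [mul_nonneg (sub_nonneg.2 ht) (sub_nonneg.2 hat)]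
  calc t * √(b ^ 2 + a ^ 2 * (1 - t ^ 2))
      ≤ |t * √(b ^ 2 + a ^ 2 * (1 - t ^ 2))| := le_abs_self _
    _ ≤ √(b ^ 2) := abs_le_sqrt (by rwa [mul_pow, sq_sqrt hX])
    _ = b := sqrt_sq hb

theorem sin_sq_le_cos_sq_of_cos_two_mul_nonneg {x : ℝ} (h : 0 ≤ cos (2 * x)) :
    sin x ^ 2 ≤ cos x ^ 2 := by
  rw [cos_two_mul'] at h
  linarith

theorem sqrt_bound_general (ω θ : ℝ) (hω : ω ∈ Set.Icc 0 (π / 2)) :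
    2 * Real.sin (ω / 2) * Real.sin θ *
        Real.sqrt (Real.cos (ω / 2) ^ 2 + Real.sin (ω / 2) ^ 2 * Real.cos θ ^ 2)
      ≤ Real.sin ω := by
  obtain ⟨hω0, hω1⟩ := hω
  have hω2 : ω = 2 * (ω / 2) := by ring
  have hs : 0 ≤ sin (ω / 2) := sin_nonneg_of_nonneg_of_le_pi (by linarith) (by linarith [pi_pos])
  have hc : 0 ≤ cos (ω / 2) := cos_nonneg_of_mem_Icc ⟨by linarith [pi_pos], by linarith⟩
  have hsc : sin (ω / 2) ^ 2 ≤ cos (ω / 2) ^ 2 :=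
    sin_sq_le_cos_sq_of_cos_two_mul_nonneg
      (hω2 ▸ cos_nonneg_of_mem_Icc ⟨by linarith [pi_pos], hω1⟩)
  have hθ : sin θ ^ 2 ≤ 1 := sin_sq_le_one θ
  rw [cos_sq' θ, hω2, sin_two_mul, ← hω2, mul_assoc (2 * sin (ω / 2))]
  exact mul_le_mul_of_nonneg_left (mul_sqrt_add_mul_one_sub_sq_le hc hsc hθ) (by positivity)

/-- If `ω ∈ [0, π/2]` and `θ ∈ [0, π]`, then
`2 sin(ω/2) sin θ √(cos²(ω/2) + sin²(ω/2) cos²θ) ≤ sin ω`. -/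
theorem sqrt_bound (ω θ : ℝ) (hω : ω ∈ Set.Icc 0 (π / 2)) (hθ : θ ∈ Set.Icc 0 π) :
    2 * Real.sin (ω / 2) * Real.sin θ *
        Real.sqrt (Real.cos (ω / 2) ^ 2 + Real.sin (ω / 2) ^ 2 * Real.cos θ ^ 2)
      ≤ Real.sin ω :=
  sqrt_bound_general ω θ hω
end
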